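/- Let A, B, C be finite nonempty sets and f : A × B → C. Then f is one-to-one in each argument if and only if for every pair of independent random variables (X,S) with X taking values in A and S taking values in B, one has H(X) = H(f(X,S)|S) and H(S) = H(f(X,S)|X). -/
import Mathlib


open scoped Classical
open Finset

/-- A probability mass function on a finite sample space, given as a real-valued
weight function that is nonnegative and sums to one. -/
structure FinPMF (Ω : Type) where
  [fin : Fintype Ω]
  p : Ω → ℝ
  nonneg : ∀ ω, 0 ≤ p ω
  sum_one : ∑ ω, p ω = 1

/-- Probability of an event. -/
noncomputable def prE {Ω : Type} (μ : FinPMF Ω) (E : Ω → Prop) : ℝ :=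
  letI := μ.fin
  ∑ ω, if E ω then μ.p ω else 0

/-- Probability that the random variable `X` takes the value `x`. -/
noncomputable def prX {Ω α : Type} (μ : FinPMF Ω) (X : Ω → α) (x : α) : ℝ :=
  prE μ (fun ω => X ω = x)

/-- Shannon entropy (base 2) of a random variable on a finite probability space. -/
noncomputable def entH {Ω α : Type} (μ : FinPMF Ω) (X : Ω → α) : ℝ :=
  letI := μ.fin;
  -∑ x ∈ Finset.univ.image X, prX μ X x * Real.logb 2 (prX μ X x)

/-- Conditional entropy `H(X | Y)` (base 2). -/
noncomputable def condH {Ω α β : Type} (μ : FinPMF Ω) (X : Ω → α) (Y : Ω → β) : ℝ :=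
  entH μ (fun ω => (X ω, Y ω)) - entH μ Y

/-- Conditional mutual information `I(X ; Y | Q)` (base 2). -/
noncomputable def condMI {Ω α β γ : Type} (μ : FinPMF Ω) (X : Ω → α) (Y : Ω → β)
    (Q : Ω → γ) : ℝ :=
  condH μ X Q + condH μ Y Q - condH μ (fun ω => (X ω, Y ω)) Q

/-- A two-argument function is one-to-one in each argument. -/
def OneToOne {A B C : Type} (f : A → B → C) : Prop :=
  (∀ b, Function.Injective fun a => f a b) ∧ ∀ a, Function.Injective (f a)

/-- Conditional pmf `p_{X|U}(x|u)`. -/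
noncomputable def condP {Ω α γ : Type} (μ : FinPMF Ω) (X : Ω → α) (U : Ω → γ)
    (x : α) (u : γ) : ℝ :=
  prE μ (fun ω => X ω = x ∧ U ω = u) / prX μ U u

/-- Independence of two random variables. -/
def IndepFun {Ω α β : Type} (μ : FinPMF Ω) (X : Ω → α) (S : Ω → β) : Prop :=
  ∀ x s, prE μ (fun ω => X ω = x ∧ S ω = s) = prX μ X x * prX μ S s

/-- Conditional independence of `A` and `B` given `Z`:
for every `z` with `P(Z = z) > 0`, `P(A = a, B = b | Z = z) = P(A = a | Z = z) P(B = b | Z = z)`. -/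
def CondIndepFun {Ω α β γ : Type} (μ : FinPMF Ω) (A : Ω → α) (B : Ω → β) (Z : Ω → γ) : Prop :=
  ∀ a b z, 0 < prX μ Z z →
    prE μ (fun ω => A ω = a ∧ B ω = b ∧ Z ω = z) / prX μ Z z =
      (prE μ (fun ω => A ω = a ∧ Z ω = z) / prX μ Z z) *
        (prE μ (fun ω => B ω = b ∧ Z ω = z) / prX μ Z z)

/-- Mutual conditional independence of `X₁, X₂, X₃` given `Q`: the joint conditional pmf
factors into the product of the conditional marginals. -/
def CondIndepFun3 {Ω α₁ α₂ α₃ γ : Type} (μ : FinPMF Ω)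
    (X₁ : Ω → α₁) (X₂ : Ω → α₂) (X₃ : Ω → α₃) (Q : Ω → γ) : Prop :=
  ∀ x₁ x₂ x₃ q, 0 < prX μ Q q →
    prE μ (fun ω => X₁ ω = x₁ ∧ X₂ ω = x₂ ∧ X₃ ω = x₃ ∧ Q ω = q) / prX μ Q q =
      (prE μ (fun ω => X₁ ω = x₁ ∧ Q ω = q) / prX μ Q q) *
        (prE μ (fun ω => X₂ ω = x₂ ∧ Q ω = q) / prX μ Q q) *
        (prE μ (fun ω => X₃ ω = x₃ ∧ Q ω = q) / prX μ Q q)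

/-- The ε-typical set (sequences whose empirical pmf is within a relative ε of `p`). -/
def Typical {𝒳 : Type} [Fintype 𝒳] (p : 𝒳 → ℝ) (ε : ℝ) (n : ℕ) (xs : Fin n → 𝒳) : Prop :=
  ∀ x : 𝒳, |((Finset.univ.filter fun i => xs i = x).card : ℝ) / n - p x| ≤ ε * p x

/-- The number of codewords `⌈2^{nR}⌉` at rate `R` and blocklength `n`. -/
noncomputable def codeSize (R : ℝ) (n : ℕ) : ℕ := ⌈(2 : ℝ) ^ ((n : ℝ) * R)⌉₊
section Aux
variable {Ω α β γ : Type}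

lemma prE_congr (μ : FinPMF Ω) {E E' : Ω → Prop} (h : ∀ ω, E ω ↔ E' ω) :
    prE μ E = prE μ E' := by
  unfold prE
  congr 1
  funext ω
  simp [h ω]

lemma prE_false (μ : FinPMF Ω) {E : Ω → Prop} (h : ∀ ω, ¬ E ω) : prE μ E = 0 := by
  unfold prE
  letI := μ.fin
  exact Finset.sum_eq_zero fun ω _ => by simp [h ω]

lemma prE_true (μ : FinPMF Ω) {E : Ω → Prop} (h : ∀ ω, E ω) : prE μ E = 1 := by
  unfold prE
  letI := μ.fin
  rw [← μ.sum_one]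
  exact Finset.sum_congr rfl fun ω _ => by simp [h ω]

lemma prX_nonneg (μ : FinPMF Ω) (X : Ω → α) (x : α) : 0 ≤ prX μ X x := by
  unfold prX prE
  letI := μ.fin
  refine Finset.sum_nonneg fun ω _ => ?_
  split
  · exact μ.nonneg ω
  · exact le_rfl

lemma prX_eq_zero (μ : FinPMF Ω) (X : Ω → α) {x : α}
    (h : ∀ ω, X ω ≠ x) : prX μ X x = 0 := prE_false μ h

lemma sum_prX [Fintype α] (μ : FinPMF Ω) (X : Ω → α) : ∑ x : α, prX μ X x = 1 := by
  unfold prX prE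
  letI := μ.fin
  rw [Finset.sum_comm, ← μ.sum_one]
  refine Finset.sum_congr rfl fun ω _ => ?_
  simp

lemma entH_eq_sum_univ [Fintype α] (μ : FinPMF Ω) (X : Ω → α) :
    entH μ X = -∑ x : α, prX μ X x * Real.logb 2 (prX μ X x) := by
  unfold entH
  letI := μ.fin
  congr 1
  refine (Finset.sum_subset (Finset.subset_univ ((Finset.univ : Finset Ω).image X))
    (f := fun x => prX μ X x * Real.logb 2 (prX μ X x)) ?_)
  intro x _ hx
  have h0 : prX μ X x = 0 := by
    refine prX_eq_zero μ X fun ω h => ?_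
    exact hx (Finset.mem_image.2 ⟨ω, Finset.mem_univ ω, h⟩)
  simp [h0]

lemma prX_comp_injective (μ : FinPMF Ω) (X : Ω → α) (g : α → γ)
    (hg : Function.Injective g) (x : α) :
    prX μ (fun ω => g (X ω)) (g x) = prX μ X x :=
  prE_congr μ fun ω => by simp [hg.eq_iff]

lemma entH_comp_injective [Fintype α] [Fintype γ] (μ : FinPMF Ω) (X : Ω → α) (g : α → γ)
    (hg : Function.Injective g) :
    entH μ (fun ω => g (X ω)) = entH μ X := by
  rw [entH_eq_sum_univ, entH_eq_sum_univ]
  congr 1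
  rw [← Finset.sum_subset (Finset.subset_univ ((Finset.univ : Finset α).image g))]
  · rw [Finset.sum_image (fun a _ b _ h => hg h)]
    refine Finset.sum_congr rfl fun x _ => ?_
    rw [prX_comp_injective μ X g hg]
  · intro y _ hy
    have h0 : prX μ (fun ω => g (X ω)) y = 0 := by
      refine prX_eq_zero μ _ fun ω h => ?_
      exact hy (Finset.mem_image.2 ⟨X ω, Finset.mem_univ _, h⟩)
    simp [h0]

lemma mul_mul_logb (a b : ℝ) (ha : 0 ≤ a) (hb : 0 ≤ b) :
    a * b * Real.logb 2 (a * b) =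
      b * (a * Real.logb 2 a) + a * (b * Real.logb 2 b) := by
  rcases eq_or_lt_of_le ha with h | h
  · simp [← h]
  rcases eq_or_lt_of_le hb with h' | h'
  · simp [← h']
  rw [Real.logb_mul h.ne' h'.ne']
  ring

lemma entH_pair_of_indep [Fintype α] [Fintype β] (μ : FinPMF Ω) (X : Ω → α) (S : Ω → β)
    (h : IndepFun μ X S) :
    entH μ (fun ω => (X ω, S ω)) = entH μ X + entH μ S := by
  have hpair : ∀ x s, prX μ (fun ω => (X ω, S ω)) (x, s) = prX μ X x * prX μ S s := by
    intro x s
    rw [← h x s]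
    exact prE_congr μ fun ω => by simp [Prod.ext_iff]
  rw [entH_eq_sum_univ μ (fun ω => (X ω, S ω)), entH_eq_sum_univ μ X, entH_eq_sum_univ μ S,
    Fintype.sum_prod_type]
  have key : ∀ x : α,
      (∑ s : β, prX μ (fun ω => (X ω, S ω)) (x, s) *
        Real.logb 2 (prX μ (fun ω => (X ω, S ω)) (x, s))) =
      prX μ X x * Real.logb 2 (prX μ X x) +
        prX μ X x * ∑ s : β, prX μ S s * Real.logb 2 (prX μ S s) := by
    intro x
    have : ∀ s : β, prX μ (fun ω => (X ω, S ω)) (x, s) *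
        Real.logb 2 (prX μ (fun ω => (X ω, S ω)) (x, s)) =
        prX μ S s * (prX μ X x * Real.logb 2 (prX μ X x)) +
          prX μ X x * (prX μ S s * Real.logb 2 (prX μ S s)) := by
      intro s
      rw [hpair]
      exact mul_mul_logb _ _ (prX_nonneg μ X x) (prX_nonneg μ S s)
    rw [Finset.sum_congr rfl fun s _ => this s, Finset.sum_add_distrib,
      ← Finset.sum_mul, ← Finset.mul_sum, sum_prX, one_mul]
  rw [Finset.sum_congr rfl fun x _ => key x, Finset.sum_add_distrib, ← Finset.sum_mul,
    sum_prX, one_mul]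
  ring

lemma entH_const (μ : FinPMF Ω) (c : α) : entH μ (fun _ => c) = 0 := by
  unfold entH
  letI := μ.fin
  rw [Finset.sum_eq_zero, neg_zero]
  intro x hx
  obtain ⟨ω, -, h⟩ := Finset.mem_image.1 hx
  subst h
  have h1 : prX μ (fun _ : Ω => c) c = 1 := prE_true μ fun _ => rfl
  simp [h1]

lemma entH_two (μ : FinPMF Ω) (X : Ω → α) (a1 a2 : α) (hne : a1 ≠ a2)
    (h1 : prX μ X a1 = 1 / 2) (h2 : prX μ X a2 = 1 / 2)
    (himg : ∀ ω, X ω = a1 ∨ X ω = a2) : entH μ X = 1 := by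
  unfold entH
  letI := μ.fin
  have hsub : (Finset.univ : Finset Ω).image X ⊆ {a1, a2} := by
    intro x hx
    obtain ⟨ω, -, h⟩ := Finset.mem_image.1 hx
    subst h
    simpa using himg ω
  rw [Finset.sum_subset hsub]
  · rw [Finset.sum_pair hne, h1, h2]
    have hl : Real.logb 2 ((1 : ℝ) / 2) = -1 := by
      rw [one_div, Real.logb_inv]
      simp
    rw [hl]
    norm_num
  · intro x hx hx'
    have h0 : prX μ X x = 0 := by
      refine prX_eq_zero μ X fun ω h => ?_
      exact hx' (by subst h; exact Finset.mem_image_of_mem X (Finset.mem_univ ω))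
    simp [h0]

lemma indep_const_right (μ : FinPMF Ω) (X : Ω → α) (b : β) :
    IndepFun μ X (fun _ => b) := by
  intro x s
  by_cases hs : b = s
  · subst hs
    have h1 : prX μ (fun _ : Ω => b) b = 1 := prE_true μ fun _ => rfl
    rw [h1, mul_one]
    exact prE_congr μ fun ω => by simp
  · have h0 : prX μ (fun _ : Ω => b) s = 0 := prE_false μ fun _ => hs
    rw [h0, mul_zero]
    exact prE_false μ fun ω hω => hs hω.2

lemma indep_const_left (μ : FinPMF Ω) (a : α) (S : Ω → β) :
    IndepFun μ (fun _ => a) S := by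
  intro x s
  by_cases hx : a = x
  · subst hx
    have h1 : prX μ (fun _ : Ω => a) a = 1 := prE_true μ fun _ => rfl
    rw [h1, one_mul]
    exact prE_congr μ fun ω => by simp
  · have h0 : prX μ (fun _ : Ω => a) x = 0 := prE_false μ fun _ => hx
    rw [h0, zero_mul]
    exact prE_false μ fun ω hω => hx hω.1

noncomputable def mu2 : FinPMF Bool :=
  ⟨fun _ => 1 / 2, fun _ => by norm_num, by norm_num⟩

lemma prX_mu2 (X : Bool → α) (x : α) :
    prX mu2 X x = (if X true = x then (1 : ℝ) / 2 else 0) +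
      (if X false = x then (1 : ℝ) / 2 else 0) := by
  unfold prX prE mu2
  simp [Fintype.sum_bool]

end Aux


/-- A two-argument function is one-to-one in each argument if and
only if for every pair of independent random variables `(X, S)` one has
`H(X) = H(f(X,S)|S)` and `H(S) = H(f(X,S)|X)`. -/
theorem oneToOne_iff_entropy_characterization
    {A B C : Type} [Fintype A] [Nonempty A] [Fintype B] [Nonempty B]
    [Fintype C] [Nonempty C] (f : A → B → C) :
    OneToOne f ↔
      ∀ (Ω : Type) (μ : FinPMF Ω) (X : Ω → A) (S : Ω → B), IndepFun μ X S →
        entH μ X = condH μ (fun ω => f (X ω) (S ω)) S ∧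
        entH μ S = condH μ (fun ω => f (X ω) (S ω)) X := by
  constructor
  · rintro ⟨h1, h2⟩ Ω μ X S hind
    constructor
    · have hg : Function.Injective (fun p : A × B => (f p.1 p.2, p.2)) := by
        rintro ⟨a, b⟩ ⟨a', b'⟩ h
        simp only [Prod.mk.injEq] at h
        obtain ⟨hfab, hb⟩ := h
        subst hb
        exact Prod.ext (h1 b hfab) rfl
      unfold condH
      have hcomp := entH_comp_injective μ (fun ω => (X ω, S ω)) _ hg
      simp only at hcomp
      rw [show (fun ω => (f (X ω) (S ω), S ω)) =
        (fun ω => (fun p : A × B => (f p.1 p.2, p.2)) (X ω, S ω)) from rfl,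
        hcomp, entH_pair_of_indep μ X S hind]
      ring
    · have hg : Function.Injective (fun p : A × B => (f p.1 p.2, p.1)) := by
        rintro ⟨a, b⟩ ⟨a', b'⟩ h
        simp only [Prod.mk.injEq] at h
        obtain ⟨hfab, ha⟩ := h
        subst ha
        exact Prod.ext rfl (h2 a hfab)
      unfold condH
      have hcomp := entH_comp_injective μ (fun ω => (X ω, S ω)) _ hg
      simp only at hcomp
      rw [show (fun ω => (f (X ω) (S ω), X ω)) =
        (fun ω => (fun p : A × B => (f p.1 p.2, p.1)) (X ω, S ω)) from rfl,
        hcomp, entH_pair_of_indep μ X S hind]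
      ring
  · intro h
    constructor
    · intro b a1 a2 hfa
      by_contra hne
      set X : Bool → A := fun ω => if ω then a1 else a2 with hX
      have h1 : prX mu2 X a1 = 1 / 2 := by
        rw [prX_mu2]
        simp [hX, Ne.symm hne]
      have h2 : prX mu2 X a2 = 1 / 2 := by
        rw [prX_mu2]
        simp [hX, hne]
      have hH := (h Bool mu2 X (fun _ => b) (indep_const_right mu2 X b)).1
      have hEX : entH mu2 X = 1 :=
        entH_two mu2 X a1 a2 hne h1 h2 (by rintro (_ | _) <;> simp [hX])
      have hF : (fun ω => f (X ω) b) = fun _ : Bool => f a1 b := by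
        funext ω
        cases ω <;> simp [hX, hfa]
      rw [hEX] at hH
      unfold condH at hH
      rw [hF] at hH
      rw [entH_const mu2 (f a1 b, b), entH_const mu2 b] at hH
      norm_num at hH
    · intro a b1 b2 hfa
      by_contra hne
      set S : Bool → B := fun ω => if ω then b1 else b2 with hS
      have h1 : prX mu2 S b1 = 1 / 2 := by
        rw [prX_mu2]
        simp [hS, Ne.symm hne]
      have h2 : prX mu2 S b2 = 1 / 2 := by
        rw [prX_mu2]
        simp [hS, hne]
      have hH := (h Bool mu2 (fun _ => a) S (indep_const_left mu2 a S)).2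
      have hES : entH mu2 S = 1 :=
        entH_two mu2 S b1 b2 hne h1 h2 (by rintro (_ | _) <;> simp [hS])
      have hF : (fun ω => f a (S ω)) = fun _ : Bool => f a b1 := by
        funext ω
        cases ω <;> simp [hS, hfa]
      rw [hES] at hH
      unfold condH at hH
      rw [hF] at hH
      rw [entH_const mu2 (f a b1, a), entH_const mu2 a] at hH
      norm_num at hH
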